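/- arXiv:2202.08421 — 5 statements merged into one kernel-verified Lean document; each statement's English description precedes it below -/
import Mathlib

section
/- For a fixed real number λ, a nonnegative integer r, and integers 0 ≤ j ≤ n, the unsigned degenerate r-Stirling numbers of the first kind and the degenerate r-Stirling numbers of the second kind satisfy the orthogonality relation Σ_{k=j}^{n} (−1)^{n−k} · [n+r, k+r]_{r,λ} · {k+r, j+r}_{r,λ} = δ_{n,j}, where δ_{n,j} is the Kronecker delta. -/
/-!
Substituting `x ↦ -x` in the defining identity of the first kind turns rising into falling
factorials up to the sign `(-1)^(n-k)`, which expresses `(y)_n` in the basis `(y + r)_{k,λ}`;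
expanding each of these with the second kind gives `(y)_n = ∑ᵢ cᵢ (y)ᵢ`, where `cᵢ` is the sum
in the theorem. The falling factorials `(y)ᵢ` are triangular on the naturals (`(m)ᵢ = 0` for
`m < i`, `(m)ₘ ≠ 0`), so the coefficients are unique and `cᵢ = δ_{n,i}`.
-/

open Finset

/-- The degenerate falling factorial `(x)_{n,λ} = x(x-λ)(x-2λ)⋯(x-(n-1)λ)`. -/
noncomputable def degFall (lam x : ℝ) (n : ℕ) : ℝ := ∏ i ∈ Finset.range n, (x - i * lam)

/-- The degenerate rising factorial `⟨x⟩_{n,λ} = x(x+λ)(x+2λ)⋯(x+(n-1)λ)`. -/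
noncomputable def degRise (lam x : ℝ) (n : ℕ) : ℝ := ∏ i ∈ Finset.range n, (x + i * lam)

lemma degRise_neg (lam x : ℝ) (n : ℕ) : degRise lam (-x) n = (-1) ^ n * degFall lam x n := by
  have h := prod_neg (s := range n) fun i : ℕ => x - i * lam
  rw [card_range] at h
  rw [degRise, degFall, ← h]
  exact prod_congr rfl fun i _ => by ring

lemma degFall_one_natCast_of_lt {m i : ℕ} (h : m < i) : degFall 1 m i = 0 :=
  prod_eq_zero (mem_range.2 h) (by ring)

lemma degFall_one_natCast_self_pos (m : ℕ) : 0 < degFall 1 m m :=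
  prod_pos fun i hi => by
    have : (i : ℝ) < m := by exact_mod_cast mem_range.1 hi
    linarith

lemma eq_of_forall_natCast_sum_mul_degFall_one_eq {N : ℕ} {a b : ℕ → ℝ}
    (h : ∀ m : ℕ, ∑ i ∈ range N, a i * degFall 1 m i = ∑ i ∈ range N, b i * degFall 1 m i) :
    ∀ j < N, a j = b j := by
  intro j
  induction j using Nat.strong_induction_on with
  | _ j ih =>
    intro hjN
    have hj := h j
    rw [← sub_eq_zero, ← sum_sub_distrib, sum_eq_single_of_mem j (mem_range.2 hjN)] at hj
    · rw [← sub_mul] at hj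
      exact sub_eq_zero.1 ((mul_eq_zero.1 hj).resolve_right (degFall_one_natCast_self_pos j).ne')
    · intro i _ hij
      rcases hij.lt_or_gt with hij | hij
      · rw [ih i hij (hij.trans hjN), sub_self]
      · rw [degFall_one_natCast_of_lt hij, mul_zero, mul_zero, sub_self]

lemma degFall_one_sub_eq_sum (lam s : ℝ) (n : ℕ) (a : ℕ → ℝ)
    (h : ∀ x, degRise 1 (x + s) n = ∑ k ∈ range (n + 1), a k * degRise lam x k) (x : ℝ) :
    degFall 1 (x - s) n = ∑ k ∈ range (n + 1), (-1) ^ (n - k) * a k * degFall lam x k := by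
  have hx := h (-x)
  rw [show -x + s = -(x - s) by ring, degRise_neg] at hx
  simp_rw [degRise_neg] at hx
  have hsq : ∀ m : ℕ, ((-1 : ℝ) ^ m) ^ 2 = 1 := fun m => by
    rw [← pow_mul, pow_mul', neg_one_sq, one_pow]
  calc degFall 1 (x - s) n = (-1) ^ n * ((-1) ^ n * degFall 1 (x - s) n) := by
        linear_combination (-degFall 1 (x - s) n) * hsq n
    _ = ∑ k ∈ range (n + 1), (-1) ^ (n - k) * a k * degFall lam x k := by
        rw [hx, mul_sum]
        refine sum_congr rfl fun k hk => ?_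
        rw [← pow_sub_mul_pow (-1 : ℝ) (Nat.le_of_lt_succ (mem_range.1 hk))]
        linear_combination (-1) ^ (n - k) * a k * degFall lam x k * hsq k

lemma sum_range_succ_comp_lower_triangular {α : Type*} {f : α → ℝ} {g h : ℕ → α → ℝ}
    {n : ℕ} {a : ℕ → ℝ} {b : ℕ → ℕ → ℝ}
    (hf : ∀ y, f y = ∑ k ∈ range (n + 1), a k * g k y)
    (hg : ∀ k y, g k y = ∑ i ∈ range (k + 1), b k i * h i y) (y : α) :
    f y = ∑ i ∈ range (n + 1), (∑ k ∈ Icc i n, a k * b k i) * h i y := by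
  simp_rw [hf, hg, mul_sum, sum_mul, mul_assoc]
  exact sum_comm' fun k i => by simp only [mem_range, mem_Icc]; omega

/-- Orthogonality: `∑_{k=j}^{n} (−1)^{n−k} [n+r,k+r]_{r,λ} {k+r,j+r}_{r,λ} = δ_{n,j}`,
where `S1 n k = [n+r,k+r]_{r,λ}` is characterized by
`⟨x+r⟩_n = ∑_{k=0}^n S1 n k ⟨x⟩_{k,λ}` and `S2 n k = {n+r,k+r}_{r,λ}` by
`(x+r)_{n,λ} = ∑_{k=0}^n S2 n k (x)_k`. -/
theorem orthogonality_first (lam : ℝ) (r : ℕ) (S1 S2 : ℕ → ℕ → ℝ)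
    (hS1 : ∀ (n : ℕ) (x : ℝ),
      degRise 1 (x + r) n = ∑ k ∈ range (n + 1), S1 n k * degRise lam x k)
    (hS2 : ∀ (n : ℕ) (x : ℝ),
      degFall lam (x + r) n = ∑ k ∈ range (n + 1), S2 n k * degFall 1 x k)
    (n j : ℕ) (hjn : j ≤ n) :
    ∑ k ∈ Finset.Icc j n, (-1 : ℝ) ^ (n - k) * S1 n k * S2 k j
      = if n = j then 1 else 0 := by
  have hcomp : ∀ y : ℝ, degFall 1 y n =
      ∑ i ∈ range (n + 1), (∑ k ∈ Icc i n, (-1) ^ (n - k) * S1 n k * S2 k i) * degFall 1 y i :=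
    sum_range_succ_comp_lower_triangular (g := fun k y => degFall lam (y + r) k)
      (fun y => by simpa using degFall_one_sub_eq_sum lam r n (S1 n) (hS1 n) (y + r)) hS2
  have hdelta : ∀ y : ℝ, degFall 1 y n =
      ∑ i ∈ range (n + 1), (if n = i then 1 else 0) * degFall 1 y i := fun y => by simp
  exact eq_of_forall_natCast_sum_mul_degFall_one_eq (fun m => (hcomp m).symm.trans (hdelta m))
    j (Nat.lt_succ_of_le hjn)
end

section
/- For a fixed real number λ, a nonnegative integer r, and integers 0 ≤ j ≤ n, the degenerate r-Stirling numbers of the second kind and the unsigned degenerate r-Stirling numbers of the first kind satisfy the orthogonality relation Σ_{k=j}^{n} (−1)^{k−j} · {n+r, k+r}_{r,λ} · [k+r, j+r]_{r,λ} = δ_{n,j}, where δ_{n,j} is the Kronecker delta. -/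
open Finset

/-!
Substituting `x ↦ -(y + r)` in the defining identity of the first kind turns it, via
`⟨-x⟩_{k,λ} = (-1)^k (x)_{k,λ}`, into the inverse expansion
`(y)_k = ∑_i (-1)^(k-i) [k+r, i+r]_{r,λ} (y+r)_{i,λ}`. Plugging this into the defining identity of
the second kind expresses `(y+r)_{n,λ}` in the basis `(y+r)_{i,λ}` with the orthogonality sums as
coefficients, and these are unique because `(X)_{i,λ}` is a polynomial of degree `i`.
-/

lemma neg_one_pow_sub_eq_mul {R : Type*} [Monoid R] [HasDistribNeg R] {i k : ℕ} (h : i ≤ k) :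
    (-1 : R) ^ (k - i) = (-1) ^ k * (-1) ^ i := by
  rw [← pow_add]
  exact neg_one_pow_congr (by rw [Nat.even_sub h, Nat.even_add])

lemma degFall_one_eq_sum_degFall {lam r : ℝ} {k : ℕ} {s : ℕ → ℝ}
    (h : ∀ x, degRise 1 (x + r) k = ∑ i ∈ range (k + 1), s i * degRise lam x i) (y : ℝ) :
    degFall 1 y k = ∑ i ∈ range (k + 1), (-1) ^ (k - i) * s i * degFall lam (y + r) i := by
  have key := h (-(y + r))
  simp_rw [show -(y + r) + r = -y by ring, degRise_neg] at key
  calc degFall 1 y k = (-1) ^ k * ((-1) ^ k * degFall 1 y k) := by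
        rw [← mul_assoc, ← pow_add, Even.neg_one_pow ⟨k, rfl⟩, one_mul]
    _ = _ := by
        rw [key, mul_sum]
        refine sum_congr rfl fun i hi => ?_
        rw [neg_one_pow_sub_eq_mul (Nat.lt_succ_iff.mp (mem_range.mp hi))]
        ring

open Polynomial in
noncomputable def degFallPoly (lam : ℝ) (n : ℕ) : ℝ[X] := ∏ i ∈ range n, (X - C (i * lam))

lemma eval_degFallPoly (lam x : ℝ) (n : ℕ) : (degFallPoly lam n).eval x = degFall lam x n := by
  simp [degFallPoly, degFall, Polynomial.eval_prod]

lemma degree_degFallPoly (lam : ℝ) (n : ℕ) : (degFallPoly lam n).degree = n := by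
  rw [degFallPoly, Polynomial.degree_prod]
  simp only [Polynomial.degree_X_sub_C, sum_const, card_range, nsmul_eq_mul, mul_one]

noncomputable def degFallSeq (lam : ℝ) : Polynomial.Sequence ℝ :=
  ⟨degFallPoly lam, degree_degFallPoly lam⟩

lemma degFallSeq_apply (lam : ℝ) (n : ℕ) : degFallSeq lam n = degFallPoly lam n := rfl

lemma coeff_eq_of_sum_degFall_eq {lam : ℝ} {s : Finset ℕ} {c d : ℕ → ℝ}
    (h : ∀ x, ∑ i ∈ s, c i * degFall lam x i = ∑ i ∈ s, d i * degFall lam x i) :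
    ∀ i ∈ s, c i = d i := by
  have hzero : ∑ i ∈ s, (c i - d i) • degFallSeq lam i = 0 := by
    refine Polynomial.funext fun x => ?_
    simp only [Polynomial.eval_finsetSum, Polynomial.eval_smul, smul_eq_mul, sub_mul,
      sum_sub_distrib, Polynomial.eval_zero, degFallSeq_apply, eval_degFallPoly]
    exact sub_eq_zero.mpr (h x)
  exact fun i hi => sub_eq_zero.mp
    (linearIndependent_iff'.mp (degFallSeq lam).linearIndependent s _ hzero i hi)

/-- Orthogonality: `∑_{k=j}^{n} (−1)^{k−j} {n+r,k+r}_{r,λ} [k+r,j+r]_{r,λ} = δ_{n,j}`. -/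
theorem orthogonality_second (lam : ℝ) (r : ℕ) (S1 S2 : ℕ → ℕ → ℝ)
    (hS1 : ∀ (n : ℕ) (x : ℝ),
      degRise 1 (x + r) n = ∑ k ∈ range (n + 1), S1 n k * degRise lam x k)
    (hS2 : ∀ (n : ℕ) (x : ℝ),
      degFall lam (x + r) n = ∑ k ∈ range (n + 1), S2 n k * degFall 1 x k)
    (n j : ℕ) (hjn : j ≤ n) :
    ∑ k ∈ Finset.Icc j n, (-1 : ℝ) ^ (k - j) * S2 n k * S1 k j
      = if n = j then 1 else 0 := by
  set c : ℕ → ℝ := fun i => ∑ k ∈ Icc i n, (-1) ^ (k - i) * S2 n k * S1 k i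
  have hexpand : ∀ y, ∑ i ∈ range (n + 1), c i * degFall lam y i
      = ∑ i ∈ range (n + 1), (if i = n then 1 else 0) * degFall lam y i := by
    intro y
    calc ∑ i ∈ range (n + 1), c i * degFall lam y i
        = ∑ k ∈ range (n + 1), ∑ i ∈ range (k + 1),
            (-1) ^ (k - i) * S2 n k * S1 k i * degFall lam y i := by
          simp only [c, sum_mul]
          refine (sum_comm' ?_).symm
          intro k i
          simp only [mem_range, mem_Icc]
          omega
      _ = ∑ k ∈ range (n + 1), S2 n k * degFall 1 (y - r) k := by
          simp only [degFall_one_eq_sum_degFall (hS1 _), sub_add_cancel, mul_sum]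
          exact sum_congr rfl fun k _ => sum_congr rfl fun i _ => by ring
      _ = degFall lam y n := by rw [← hS2, sub_add_cancel]
      _ = _ := by simp
  have hcj := coeff_eq_of_sum_degFall_eq hexpand j (mem_range.mpr (Nat.lt_succ_of_le hjn))
  exact hcj.trans (if_congr eq_comm rfl rfl)
end

section
/- Fix a real number λ and a nonnegative integer r. For each k ≥ 0, let β_{k,λ}(r) = Σ_{j=0}^{k} (−1)^j {k+r, j+r}_{r,λ} · j!/(j+1) (the value at r of the fully degenerate Bernoulli polynomial). Then for every n ≥ 0, n!/(n+1) = Σ_{k=0}^{n} (−1)^k [n+r, k+r]_{r,λ} β_{k,λ}(r). -/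
open Finset

/-! The proof is matrix inversion. Substituting `x ↦ -(x + r)` in the defining identity of the
second-kind numbers turns falling into rising factorials, so `⟨x⟩_{k,λ}` expands in the rising
factorials `⟨x + r⟩_j` with coefficients `(-1)^(k+j) {k+r, j+r}`. Feeding this into the defining
identity of the first-kind numbers expresses `⟨y⟩_n` in the basis `⟨y⟩_j`; since the rising
factorials are linearly independent (evaluate at `y = 0, -1, -2, …`), the signed product
`∑ₖ (-1)^(k+j) [n+r, k+r] {k+r, j+r}` is `δ_{jn}`, and pairing it with `j!/(j+1)` gives the claim. -/

theorem degFall_neg (lam x : ℝ) (n : ℕ) : degFall lam (-x) n = (-1) ^ n * degRise lam x n := by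
  induction n with
  | zero => simp [degFall, degRise]
  | succ n ih =>
    simp only [degFall, degRise, prod_range_succ] at ih ⊢
    rw [ih]
    ring

theorem degRise_one_neg_natCast_of_lt {j n : ℕ} (h : j < n) : degRise 1 (-(j : ℝ)) n = 0 :=
  prod_eq_zero (mem_range.mpr h) (by ring)

theorem degRise_one_neg_natCast_self_ne_zero (j : ℕ) : degRise 1 (-(j : ℝ)) j ≠ 0 :=
  prod_ne_zero_iff.mpr fun i hi => by
    have : (i : ℝ) < j := by exact_mod_cast mem_range.mp hi
    linarith

theorem eq_zero_of_forall_sum_mul_degRise_one_eq_zero {n : ℕ} {c : ℕ → ℝ}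
    (h : ∀ x, ∑ j ∈ range (n + 1), c j * degRise 1 x j = 0) : ∀ j ≤ n, c j = 0 := by
  intro j
  induction j using Nat.strong_induction_on with
  | _ j ih =>
    intro hj
    have hsum : ∑ i ∈ range (n + 1), c i * degRise 1 (-(j : ℝ)) i
        = c j * degRise 1 (-(j : ℝ)) j := by
      refine sum_eq_single j (fun i _ hij => ?_) (fun hj' => absurd (by simpa using hj) hj')
      rcases lt_or_gt_of_ne hij with hlt | hgt
      · rw [ih i hlt (hlt.le.trans hj), zero_mul]
      · rw [degRise_one_neg_natCast_of_lt hgt, mul_zero]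
    have := h (-(j : ℝ))
    rw [hsum] at this
    exact (mul_eq_zero.mp this).resolve_right (degRise_one_neg_natCast_self_ne_zero j)

theorem eq_of_forall_sum_mul_degRise_one_eq {n : ℕ} {c d : ℕ → ℝ}
    (h : ∀ x, ∑ j ∈ range (n + 1), c j * degRise 1 x j
      = ∑ j ∈ range (n + 1), d j * degRise 1 x j) : ∀ j ≤ n, c j = d j := by
  refine fun j hj => sub_eq_zero.mp
    (eq_zero_of_forall_sum_mul_degRise_one_eq_zero (c := c - d) (fun x => ?_) j hj)
  simp only [Pi.sub_apply, sub_mul, sum_sub_distrib, h, sub_self]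

theorem degRise_eq_sum_degRise_one_of_degFall_eq_sum {lam r : ℝ} {k : ℕ} {s : ℕ → ℝ}
    (h : ∀ x, degFall lam (x + r) k = ∑ j ∈ range (k + 1), s j * degFall 1 x j) (x : ℝ) :
    degRise lam x k = ∑ j ∈ range (k + 1), (-1) ^ (k + j) * s j * degRise 1 (x + r) j := by
  have hx := h (-(x + r))
  rw [show -(x + r) + r = -x by ring, degFall_neg] at hx
  calc degRise lam x k = (-1) ^ k * ((-1) ^ k * degRise lam x k) := by
        rw [← mul_assoc, ← pow_add, ← two_mul, pow_mul, neg_one_sq, one_pow, one_mul]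
    _ = ∑ j ∈ range (k + 1), (-1) ^ (k + j) * s j * degRise 1 (x + r) j := by
        rw [hx, mul_sum]
        refine sum_congr rfl fun j _ => ?_
        rw [degFall_neg, pow_add]
        ring

theorem sum_range_mul_triangular_sum_comm {R : Type*} [CommSemiring R] (n : ℕ) (a : ℕ → R)
    (b : ℕ → ℕ → R) (p : ℕ → R) :
    ∑ k ∈ range (n + 1), a k * ∑ j ∈ range (k + 1), b k j * p j
      = ∑ j ∈ range (n + 1), (∑ k ∈ Icc j n, a k * b k j) * p j := by
  simp only [mul_sum, sum_mul, mul_assoc]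
  exact sum_comm' fun k j => by simp only [mem_range, mem_Icc]; omega

/-- With `β_{k,λ}(r) = ∑_{j=0}^{k} (−1)^j {k+r,j+r}_{r,λ} j!/(j+1)` (the fully degenerate
Bernoulli polynomial at `r`), we have `n!/(n+1) = ∑_{k=0}^{n} (−1)^k [n+r,k+r]_{r,λ} β_{k,λ}(r)`. -/
theorem fully_degenerate_bernoulli_identity (lam : ℝ) (r : ℕ) (S1 S2 : ℕ → ℕ → ℝ)
    (hS1 : ∀ (n : ℕ) (x : ℝ),
      degRise 1 (x + r) n = ∑ k ∈ range (n + 1), S1 n k * degRise lam x k)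
    (hS2 : ∀ (n : ℕ) (x : ℝ),
      degFall lam (x + r) n = ∑ k ∈ range (n + 1), S2 n k * degFall 1 x k)
    (β : ℕ → ℝ)
    (hβ : ∀ k : ℕ, β k = ∑ j ∈ range (k + 1), (-1 : ℝ) ^ j * S2 k j * (Nat.factorial j : ℝ) / (j + 1)) :
    ∀ n : ℕ, (Nat.factorial n : ℝ) / (n + 1) = ∑ k ∈ range (n + 1), (-1 : ℝ) ^ k * S1 n k * β k := by
  intro n
  set A : ℕ → ℝ := fun j => ∑ k ∈ Icc j n, S1 n k * ((-1) ^ (k + j) * S2 k j)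
  have hA : ∀ j ≤ n, A j = if j = n then 1 else 0 := by
    refine eq_of_forall_sum_mul_degRise_one_eq fun y => ?_
    obtain ⟨x, rfl⟩ : ∃ x, y = x + r := ⟨y - r, by ring⟩
    rw [← sum_range_mul_triangular_sum_comm]
    simp only [← degRise_eq_sum_degRise_one_of_degFall_eq_sum (hS2 _), ← hS1, ite_mul, one_mul,
      zero_mul, sum_ite_eq', mem_range, Nat.lt_succ_self, if_true]
  calc (Nat.factorial n : ℝ) / (n + 1)
      = ∑ j ∈ range (n + 1), (if j = n then 1 else 0) * ((Nat.factorial j : ℝ) / (j + 1)) := by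
        simp
    _ = ∑ j ∈ range (n + 1), A j * ((Nat.factorial j : ℝ) / (j + 1)) :=
        sum_congr rfl fun j hj => by rw [hA j (Nat.lt_succ_iff.mp (mem_range.mp hj))]
    _ = ∑ k ∈ range (n + 1), (-1 : ℝ) ^ k * S1 n k * β k := by
        rw [← sum_range_mul_triangular_sum_comm]
        refine sum_congr rfl fun k _ => ?_
        rw [hβ, mul_sum, mul_sum]
        refine sum_congr rfl fun j _ => ?_
        rw [pow_add]
        ring
end

section
/- Fix a real number λ and let s be a positive integer. Define the degenerate harmonic numbers by H_{n,λ} = Σ_{k=1}^{n} (−1)^{k−1} (λ−1)(λ−2)···(λ−k+1)/k! for n ≥ 1 (empty product equal to 1 for k = 1) and H_{0,λ} = 0, and the degenerate hyperharmonic numbers by H^{(1)}_{n,λ} = H_{n,λ}, H^{(m)}_{0,λ} = 0 and H^{(m)}_{n,λ} = Σ_{k=1}^{n} H^{(m−1)}_{k,λ} for m ≥ 2 and n ≥ 1. Then in the ring ℝ[[t]] of formal power series, −(1 − t)^{−s} · log_λ(1 − t) = Σ_{n≥1} H^{(s)}_{n,λ} t^n, where (1 − t)^{−s} is the s-th power of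 the inverse of the unit 1 − t. -/
open Finset PowerSeries

/-- The degenerate logarithm `log_λ(1+t) = ∑_{n≥1} (∏_{i=1}^{n-1}(λ−i)) tⁿ/n!`
as a formal power series. -/
noncomputable def degLog (lam : ℝ) : PowerSeries ℝ :=
  PowerSeries.mk fun n =>
    if n = 0 then 0
    else (∏ i ∈ Finset.Icc 1 (n - 1), (lam - (i : ℝ))) / (Nat.factorial n : ℝ)

/-- The degenerate harmonic numbers
`H_{n,λ} = ∑_{k=1}^{n} (−1)^{k−1} (λ−1)(λ−2)⋯(λ−k+1)/k!`, with `H_{0,λ} = 0`. -/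
noncomputable def degHarmonic (lam : ℝ) (n : ℕ) : ℝ :=
  ∑ k ∈ Finset.Icc 1 n,
    (-1 : ℝ) ^ (k - 1) * (∏ i ∈ Finset.Icc 1 (k - 1), (lam - (i : ℝ))) /
      (Nat.factorial k : ℝ)

/-- The degenerate hyperharmonic numbers: `H^{(1)}_{n,λ} = H_{n,λ}`, `H^{(m)}_{0,λ} = 0`, and
`H^{(m)}_{n,λ} = ∑_{k=1}^{n} H^{(m−1)}_{k,λ}` for `m ≥ 2`. -/
noncomputable def degHyperharmonic (lam : ℝ) : ℕ → ℕ → ℝ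
  | 0, _ => 0
  | 1, n => degHarmonic lam n
  | m + 2, n => ∑ k ∈ Finset.Icc 1 n, degHyperharmonic lam (m + 1) k

/-! Multiplication by `(1 - t)⁻¹ = ∑ tⁿ` turns a series into the series of its partial sums.
Since `-log_λ(1 - t)` has coefficients `(-1)^(k-1) (λ-1)⋯(λ-k+1)/k!`, one such multiplication
yields the degenerate harmonic numbers, and each further one raises the order of the
hyperharmonic numbers by one. -/

theorem PowerSeries.inv_one_sub_X {K : Type*} [Field K] : (1 - X : K⟦X⟧)⁻¹ = mk 1 :=
  ((PowerSeries.eq_inv_iff_mul_eq_one (by simp)).2 (mk_one_mul_one_sub_eq_one K)).symm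

theorem PowerSeries.inv_one_sub_X_mul_eq_mk_sum_Icc {K : Type*} [Field K] {g : K⟦X⟧}
    (hg : constantCoeff g = 0) :
    (1 - X)⁻¹ * g = mk fun n => ∑ k ∈ Icc 1 n, coeff k g := by
  ext n
  rw [inv_one_sub_X, mul_comm, coeff_mul, coeff_mk,
    Nat.sum_antidiagonal_eq_sum_range_succ (fun i j => coeff i g * coeff j (mk 1)), range_eq_Ico,
    sum_eq_sum_Ico_succ_bot (by omega : 0 < n + 1), zero_add, Ico_add_one_right_eq_Icc]
  simp [hg]

theorem PowerSeries.constantCoeff_rescale {R : Type*} [CommSemiring R] (a : R) (f : R⟦X⟧) :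
    constantCoeff (rescale a f) = constantCoeff f := by
  simp [← coeff_zero_eq_constantCoeff_apply, -coeff_zero_eq_constantCoeff, coeff_rescale]

theorem constantCoeff_degLog (lam : ℝ) : constantCoeff (degLog lam) = 0 := by
  simp [degLog, ← coeff_zero_eq_constantCoeff_apply]

theorem coeff_neg_rescale_neg_one_degLog (lam : ℝ) {k : ℕ} (hk : k ≠ 0) :
    coeff k (-rescale (-1) (degLog lam)) =
      (-1) ^ (k - 1) * (∏ i ∈ Icc 1 (k - 1), (lam - i)) / k.factorial := by
  obtain ⟨j, rfl⟩ := Nat.exists_eq_succ_of_ne_zero hk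
  simp [degLog, pow_succ]
  ring

theorem inv_one_sub_X_mul_neg_rescale_degLog (lam : ℝ) :
    (1 - X : ℝ⟦X⟧)⁻¹ * -rescale (-1) (degLog lam) = PowerSeries.mk (degHarmonic lam) := by
  rw [inv_one_sub_X_mul_eq_mk_sum_Icc (by simp [constantCoeff_rescale, constantCoeff_degLog])]
  ext n
  simp only [coeff_mk, degHarmonic]
  exact sum_congr rfl fun k hk =>
    coeff_neg_rescale_neg_one_degLog lam (by simp at hk; omega)

theorem degHyperharmonic_zero_right (lam : ℝ) (m : ℕ) : degHyperharmonic lam m 0 = 0 := by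
  match m with
  | 0 => rfl
  | 1 => simp [degHyperharmonic, degHarmonic]
  | m + 2 => simp [degHyperharmonic]

theorem inv_one_sub_X_mul_degHyperharmonic (lam : ℝ) {m : ℕ} (hm : m ≠ 0) :
    (1 - X : ℝ⟦X⟧)⁻¹ * PowerSeries.mk (degHyperharmonic lam m) =
      PowerSeries.mk (degHyperharmonic lam (m + 1)) := by
  obtain ⟨m, rfl⟩ := Nat.exists_eq_succ_of_ne_zero hm
  rw [inv_one_sub_X_mul_eq_mk_sum_Icc (by simp [degHyperharmonic_zero_right])]
  simp [degHyperharmonic]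

/-- For a positive integer `s`, in `ℝ⟦t⟧` one has
`−(1−t)^{−s} log_λ(1−t) = ∑_{n≥1} H^{(s)}_{n,λ} tⁿ`, where `log_λ(1−t)` is `log_λ(1+t)`
with `−t` substituted for `t`. -/
theorem degenerate_hyperharmonic_generating (lam : ℝ) (s : ℕ) (hs : 1 ≤ s) :
    -(((1 - PowerSeries.X : PowerSeries ℝ)⁻¹) ^ s *
        PowerSeries.rescale (-1 : ℝ) (degLog lam))
      = PowerSeries.mk fun n => degHyperharmonic lam s n := by
  induction s, hs using Nat.le_induction with
  | base =>
    rw [pow_one, ← mul_neg, inv_one_sub_X_mul_neg_rescale_degLog]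
    rfl
  | succ m hm ih =>
    rw [pow_succ', mul_assoc, ← mul_neg, ih, inv_one_sub_X_mul_degHyperharmonic lam (by omega)]
end

section
/- Fix a real number λ and let r be a positive integer. Define the degenerate Bernoulli numbers of the second kind at r by the identity t/log_λ(1+t) · (1+t)^r = Σ_{n≥0} b_{n,λ}(r) t^n/n! in ℝ[[t]], which determines b_{n,λ}(r) uniquely since log_λ(1+t)/t has constant term 1 and is hence invertible. Define the degenerate hyperharmonic numbers by H^{(1)}_{n,λ} = H_{n,λ} for n ≥ 1, H^{(1)}_{0,λ} = 0, and H^{(m)}_{0,λ} = 0, H^{(m)}_{n,λ} = Σ_{k=1}^{n} H^{(m−1)}_{k,λ} for m ≥ 2, n ≥ 1, where H_{n,λ} = Σ_{k=1}^{n} (−1)^{k−1} (λ−1)(λ−2)···(λ−k+1)/k!. Then for every n ≥ 0, Σ_{k=0}^{n} ((−1)^k/k!) b_{k,λ}(r) H^{(r)}_{n−k,λ} = δ_{n,1}, where δ_{n,1} is the Kronecker delta. -/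
open Finset PowerSeries

/-- The unit power series `log_λ(1+t)/t = ∑_{n≥0} (∏_{i=1}^{n}(λ−i)) tⁿ/(n+1)!`, where
`log_λ(1+t) = ∑_{n≥1} (∏_{i=1}^{n-1}(λ−i)) tⁿ/n!` is the degenerate logarithm. Its constant
term is `1`, so it is invertible, and `t/log_λ(1+t)` is by definition its inverse. -/
noncomputable def degLogDivT (lam : ℝ) : PowerSeries ℝ :=
  PowerSeries.mk fun n =>
    (∏ i ∈ Finset.Icc 1 n, (lam - (i : ℝ))) / (Nat.factorial (n + 1) : ℝ)

/-
Proof idea: put `t ↦ -t`. Multiplying by `1 - t` takes first differences of coefficients, so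
`∑ H_{n,λ} tⁿ · (1 - t) = t · L(-t)` with `L = log_λ(1+t)/t`, and since `H^{(m+1)}` is the
sequence of partial sums of `H^{(m)}`, `∑ H^{(r)}_{n,λ} tⁿ · (1 - t)^r = t · L(-t)`.
The defining identity of `b_{n,λ}(r)` becomes `L(-t) · ∑ b_{n,λ}(r) (-t)ⁿ/n! = (1 - t)^r`.
Cancelling `(1 - t)^r` gives `∑ b_{n,λ}(r) (-t)ⁿ/n! · ∑ H^{(r)}_{n,λ} tⁿ = t`, whose `n`-th
coefficient is the claimed identity.
-/

namespace PowerSeries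

variable {R : Type*} [CommRing R]

theorem rescale_neg_one_one_add_X : rescale (-1 : R) (1 + X) = 1 - X := by
  rw [map_add, map_one, rescale_neg_one_X, sub_eq_add_neg]

theorem coeff_zero_mul_one_sub_X (φ : R⟦X⟧) : coeff 0 (φ * (1 - X)) = coeff 0 φ := by
  simp [mul_sub]

theorem coeff_succ_mul_one_sub_X (φ : R⟦X⟧) (n : ℕ) :
    coeff (n + 1) (φ * (1 - X)) = coeff (n + 1) φ - coeff n φ := by
  rw [mul_sub, mul_one, map_sub, coeff_succ_mul_X]

theorem coeff_rescale_neg_one_mul_mk (f g : ℕ → R) (n : ℕ) :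
    coeff n (rescale (-1) (mk f) * mk g) =
      ∑ k ∈ range (n + 1), (-1) ^ k * f k * g (n - k) := by
  rw [coeff_mul, Nat.sum_antidiagonal_eq_sum_range_succ_mk]
  simp only [coeff_rescale, coeff_mk]

end PowerSeries

theorem constantCoeff_degLogDivT (lam : ℝ) : constantCoeff (degLogDivT lam) = 1 := by
  simp [degLogDivT]

theorem mk_degHarmonic_mul_one_sub_X (lam : ℝ) :
    PowerSeries.mk (degHarmonic lam) * (1 - X) = X * rescale (-1) (degLogDivT lam) := by
  ext n
  rw [mul_comm X]
  cases n with
  | zero => simp [coeff_zero_mul_one_sub_X, degHarmonic]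
  | succ n =>
    rw [coeff_succ_mul_one_sub_X, coeff_succ_mul_X]
    simp only [coeff_mk, coeff_rescale, degLogDivT, degHarmonic]
    rw [sum_Icc_succ_top (by omega : 1 ≤ n + 1)]
    simp only [add_sub_cancel_left, add_tsub_cancel_right, Nat.factorial_succ]
    push_cast
    ring

theorem mk_degHyperharmonic_succ_mul_one_sub_X (lam : ℝ) {m : ℕ} (hm : 1 ≤ m) :
    PowerSeries.mk (degHyperharmonic lam (m + 1)) * (1 - X) =
      PowerSeries.mk (degHyperharmonic lam m) := by
  obtain ⟨m, rfl⟩ := Nat.exists_eq_add_of_le' hm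
  ext n
  cases n with
  | zero => simp [coeff_zero_mul_one_sub_X, degHyperharmonic_zero_right]
  | succ n =>
    rw [coeff_succ_mul_one_sub_X]
    simp only [coeff_mk, degHyperharmonic]
    rw [sum_Icc_succ_top (by omega : 1 ≤ n + 1), add_sub_cancel_left]

theorem mk_degHyperharmonic_mul_one_sub_X_pow (lam : ℝ) {r : ℕ} (hr : 1 ≤ r) :
    PowerSeries.mk (degHyperharmonic lam r) * (1 - X) ^ r = X * rescale (-1) (degLogDivT lam) := by
  induction r, hr using Nat.le_induction with
  | base => rw [pow_one]; exact mk_degHarmonic_mul_one_sub_X lam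
  | succ r hr ih =>
    rw [pow_succ', ← mul_assoc, mk_degHyperharmonic_succ_mul_one_sub_X lam hr, ih]

/-- Let `r ≥ 1` and let `b_{n,λ}(r)` be the degenerate Bernoulli numbers of the second kind
at `r`, defined by `t/log_λ(1+t) · (1+t)^r = ∑_{n≥0} b_{n,λ}(r) tⁿ/n!`. Then for all `n ≥ 0`,
`∑_{k=0}^{n} ((−1)^k/k!) b_{k,λ}(r) H^{(r)}_{n−k,λ} = δ_{n,1}`. -/
theorem degenerate_bernoulli_second_hyperharmonic (lam : ℝ) (r : ℕ) (hr : 1 ≤ r)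
    (b : ℕ → ℝ)
    (hb : (degLogDivT lam)⁻¹ * (1 + PowerSeries.X : PowerSeries ℝ) ^ r
      = PowerSeries.mk fun n => b n / (Nat.factorial n : ℝ)) :
    ∀ n : ℕ, ∑ k ∈ range (n + 1),
        ((-1 : ℝ) ^ k / (Nat.factorial k : ℝ)) * b k * degHyperharmonic lam r (n - k)
      = if n = 1 then 1 else 0 := by
  set L := degLogDivT lam
  set B := PowerSeries.mk fun n => b n / (Nat.factorial n : ℝ)
  set H := PowerSeries.mk (degHyperharmonic lam r)
  have hLB : rescale (-1 : ℝ) L * rescale (-1) B = (1 - X) ^ r := by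
    rw [← map_mul, ← hb, ← mul_assoc, PowerSeries.mul_inv_cancel _ (by simp [L,
      constantCoeff_degLogDivT]), one_mul, map_pow, rescale_neg_one_one_add_X]
  have h_ne : (1 - X : ℝ⟦X⟧) ^ r ≠ 0 :=
    pow_ne_zero r fun h => by simpa using congrArg (coeff 0) h
  have hBH : rescale (-1 : ℝ) B * H = X := by
    refine mul_right_cancel₀ h_ne ?_
    rw [mul_assoc, mk_degHyperharmonic_mul_one_sub_X_pow lam hr, ← hLB]
    ring
  intro n
  rw [← coeff_X (R := ℝ), ← hBH, coeff_rescale_neg_one_mul_mk]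
  exact sum_congr rfl fun k _ => by ring
end
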